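/- Let g : U → ℝ be C² with positive definite Hessian on an open convex set U ⊆ ℝⁿ, φ(x,y) = g(y) + (x−y)·∇g(y), and for fixed x ∈ U suppose ∫_U e^{2Nφ(x,y)} dy < ∞ for all N ≥ 1. Then for any compact set K ⊆ U with x ∉ K, the normalized density e^{2Nφ(x,y)} / ∫_U e^{2Nφ(x,y')} dy' tends to 0 uniformly on K as N → ∞; equivalently, sup_{y∈K} φ(x,y) < φ(x,x) and the mass concentrates at y = x. -/

import Mathlib

/-!
Restricted to the segment from `y` to `x`, `g` has a strictly increasing derivative (the Hessian
is positive definite), so the tangent plane of `g` at `y` lies strictly below `g` at `x`: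
`φ(x,y) < g x = φ(x,x)`. By compactness `φ(x,·) ≤ M` on `K` for some `M < g x`, while
`φ(x,·) ≥ c > M` on a small open neighbourhood `B` of `x`. Hence the normalized density is at
most `e^{2N(M-c)} / vol B` on `K`, which tends to `0`.
-/

open MeasureTheory Filter Set Real
open scoped RealInnerProductSpace Topology ENNReal

theorem add_deriv_mul_lt_of_strictMonoOn_deriv {f f' : ℝ → ℝ} {a b : ℝ} (hab : a < b)
    (hf : ∀ t ∈ Icc a b, HasDerivAt f (f' t) t) (hf' : StrictMonoOn f' (Icc a b)) :
    f a + f' a * (b - a) < f b := by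
  obtain ⟨c, hc, hslope⟩ := exists_hasDerivAt_eq_slope f f' hab
    (fun t ht => (hf t ht).continuousAt.continuousWithinAt)
    (fun t ht => hf t (Ioo_subset_Icc_self ht))
  have hac : f' a < f' c :=
    hf' (left_mem_Icc.2 hab.le) (Ioo_subset_Icc_self hc) hc.1
  rw [hslope, lt_div_iff₀ (sub_pos.2 hab)] at hac
  linarith

theorem Convex.add_inner_sub_gradient_lt {E : Type*} [NormedAddCommGroup E]
    [InnerProductSpace ℝ E] [CompleteSpace E] {U : Set E} {g : E → ℝ} {g' : E → E}
    {H : E → E →L[ℝ] E} (hconv : Convex ℝ U)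
    (hgrad : ∀ y ∈ U, HasGradientAt g (g' y) y) (hhess : ∀ y ∈ U, HasFDerivAt g' (H y) y)
    (hposdef : ∀ y ∈ U, ∀ v, v ≠ 0 → 0 < ⟪H y v, v⟫)
    {x y : E} (hy : y ∈ U) (hx : x ∈ U) (hne : y ≠ x) :
    g y + ⟪x - y, g' y⟫ < g x := by
  set v := x - y
  set γ : ℝ → E := fun t => y + t • v
  have hγU : ∀ t ∈ Icc (0 : ℝ) 1, γ t ∈ U := fun t ht => hconv.add_smul_sub_mem hy hx ht
  have hγ : ∀ t : ℝ, HasDerivAt γ v t := fun t => by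
    simpa only [id, one_smul] using ((hasDerivAt_id t).smul_const v).const_add y
  have hderiv : ∀ t ∈ Icc (0 : ℝ) 1, HasDerivAt (g ∘ γ) ⟪v, g' (γ t)⟫ t := fun t ht => by
    simpa [real_inner_comm] using
      (hgrad (γ t) (hγU t ht)).hasFDerivAt.comp_hasDerivAt t (hγ t)
  have hderiv2 : ∀ t ∈ Icc (0 : ℝ) 1,
      HasDerivAt (fun s => ⟪v, g' (γ s)⟫) ⟪H (γ t) v, v⟫ t := fun t ht => by
    simpa [real_inner_comm] using
      (hasDerivAt_const t v).inner ℝ ((hhess (γ t) (hγU t ht)).comp_hasDerivAt t (hγ t))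
  have hmono : StrictMonoOn (fun s => ⟪v, g' (γ s)⟫) (Icc 0 1) := by
    refine strictMonoOn_of_deriv_pos (convex_Icc 0 1)
      (fun t ht => (hderiv2 t ht).continuousAt.continuousWithinAt) fun t ht => ?_
    rw [interior_Icc] at ht
    rw [(hderiv2 t (Ioo_subset_Icc_self ht)).deriv]
    exact hposdef _ (hγU t (Ioo_subset_Icc_self ht)) v (sub_ne_zero.2 hne.symm)
  simpa [γ, v] using add_deriv_mul_lt_of_strictMonoOn_deriv one_pos hderiv hmono

section Concentration

variable {X : Type*} [MeasurableSpace X] {μ : Measure X} {U B K : Set X} {φ : X → ℝ}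

theorem exp_mul_mul_measureReal_le_setIntegral_exp_mul {t c : ℝ} (ht : 0 ≤ t)
    (hB : MeasurableSet B) (hBU : B ⊆ U) (hμB : μ B ≠ ∞) (hc : ∀ y ∈ B, c ≤ φ y)
    (hint : IntegrableOn (fun y => exp (t * φ y)) U μ) :
    exp (t * c) * μ.real B ≤ ∫ y in U, exp (t * φ y) ∂μ :=
  calc exp (t * c) * μ.real B ≤ ∫ y in B, exp (t * φ y) ∂μ :=
        setIntegral_ge_of_const_le_real hB hμB
          (fun y hy => exp_le_exp.2 (mul_le_mul_of_nonneg_left (hc y hy) ht)) (hint.mono_set hBU)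
    _ ≤ ∫ y in U, exp (t * φ y) ∂μ :=
        setIntegral_mono_set hint (.of_forall fun _ => (exp_pos _).le) hBU.eventuallyLE

theorem exp_mul_div_setIntegral_exp_mul_le {t M c : ℝ} (ht : 0 ≤ t)
    (hB : MeasurableSet B) (hBU : B ⊆ U) (hμB₀ : μ B ≠ 0) (hμB : μ B ≠ ∞)
    (hc : ∀ y ∈ B, c ≤ φ y) (hint : IntegrableOn (fun y => exp (t * φ y)) U μ)
    {y : X} (hy : φ y ≤ M) :
    exp (t * φ y) / ∫ y' in U, exp (t * φ y') ∂μ ≤ exp (t * (M - c)) / μ.real B := by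
  have hB_pos : 0 < μ.real B := ENNReal.toReal_pos hμB₀ hμB
  calc exp (t * φ y) / ∫ y' in U, exp (t * φ y') ∂μ ≤ exp (t * M) / (exp (t * c) * μ.real B) :=
        div_le_div₀ (exp_pos _).le (exp_le_exp.2 (mul_le_mul_of_nonneg_left hy ht))
          (by positivity) (exp_mul_mul_measureReal_le_setIntegral_exp_mul ht hB hBU hμB hc hint)
    _ = exp (t * (M - c)) / μ.real B := by rw [mul_sub, exp_sub, div_div]

theorem tendstoUniformlyOn_exp_mul_div_setIntegral_of_le_of_lt {ι : Type*} {l : Filter ι}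
    {t : ι → ℝ} (ht : Tendsto t l atTop) {M c : ℝ} (hMc : M < c) (hK : ∀ y ∈ K, φ y ≤ M)
    (hB : MeasurableSet B) (hBU : B ⊆ U) (hμB₀ : μ B ≠ 0) (hμB : μ B ≠ ∞)
    (hc : ∀ y ∈ B, c ≤ φ y) (hint : ∀ᶠ i in l, IntegrableOn (fun y => exp (t i * φ y)) U μ) :
    TendstoUniformlyOn (fun i y => exp (t i * φ y) / ∫ y' in U, exp (t i * φ y') ∂μ) 0 l K := by
  have hbound : Tendsto (fun i => exp (t i * (M - c)) / μ.real B) l (𝓝 0) := by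
    simpa using (tendsto_exp_atBot.comp (ht.atTop_mul_const_of_neg (sub_neg.2 hMc))).div_const
      (μ.real B)
  rw [Metric.tendstoUniformlyOn_iff]
  intro ε hε
  filter_upwards [hbound.eventually_lt_const hε, ht.eventually_ge_atTop 0, hint]
    with i hi ht₀ hinti y hy
  have hle := exp_mul_div_setIntegral_exp_mul_le ht₀ hB hBU hμB₀ hμB hc hinti (hK y hy)
  have hnonneg : 0 ≤ exp (t i * φ y) / ∫ y' in U, exp (t i * φ y') ∂μ :=
    div_nonneg (exp_pos _).le (integral_nonneg fun _ => (exp_pos _).le)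
  rw [Pi.zero_apply, dist_zero_left, norm_of_nonneg hnonneg]
  exact hle.trans_lt hi

theorem tendstoUniformlyOn_exp_mul_div_setIntegral [TopologicalSpace X] [OpensMeasurableSpace X]
    [μ.IsOpenPosMeasure] [IsLocallyFiniteMeasure μ] {x : X} (hK : IsCompact K)
    (hφK : ContinuousOn φ K) (hφx : ContinuousAt φ x) (hlt : ∀ y ∈ K, φ y < φ x) (hU : U ∈ 𝓝 x)
    {ι : Type*} {l : Filter ι} {t : ι → ℝ} (ht : Tendsto t l atTop)
    (hint : ∀ᶠ i in l, IntegrableOn (fun y => exp (t i * φ y)) U μ) :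
    TendstoUniformlyOn (fun i y => exp (t i * φ y) / ∫ y' in U, exp (t i * φ y') ∂μ) 0 l K := by
  rcases K.eq_empty_or_nonempty with rfl | hK_ne
  · exact tendstoUniformlyOn_empty
  obtain ⟨y₀, hy₀K, hy₀max⟩ := hK.exists_isMaxOn hK_ne hφK
  obtain ⟨c, hy₀c, hcx⟩ := exists_between (hlt y₀ hy₀K)
  have hnear : ∀ᶠ y in 𝓝 x, c ≤ φ y ∧ y ∈ U := (hφx.eventually_const_le hcx).and hU
  obtain ⟨B, ⟨⟨hBx, hBo⟩, hBc⟩, hμB⟩ := (μ.finiteAt_nhds x).exists_mem_basis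
    ((nhds_basis_opens' x).restrict_subset hnear)
  exact tendstoUniformlyOn_exp_mul_div_setIntegral_of_le_of_lt ht hy₀c
    (fun y hy => hy₀max hy) hBo.measurableSet (fun y hy => (hBc hy).2)
    (μ.measure_pos_of_mem_nhds hBx).ne' hμB.ne (fun y hy => (hBc hy).1) hint

end Concentration

theorem density_concentration_general {n : ℕ} (U : Set (EuclideanSpace ℝ (Fin n)))
    (hU : IsOpen U) (hconv : Convex ℝ U)
    (g : EuclideanSpace ℝ (Fin n) → ℝ)
    (g' : EuclideanSpace ℝ (Fin n) → EuclideanSpace ℝ (Fin n))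
    (H : EuclideanSpace ℝ (Fin n) → EuclideanSpace ℝ (Fin n) →L[ℝ] EuclideanSpace ℝ (Fin n))
    (hgrad : ∀ y ∈ U, HasGradientAt g (g' y) y)
    (hhess : ∀ y ∈ U, HasFDerivAt g' (H y) y)
    (hposdef : ∀ y ∈ U, ∀ v : EuclideanSpace ℝ (Fin n), v ≠ 0 → 0 < ⟪H y v, v⟫)
    (x : EuclideanSpace ℝ (Fin n)) (hx : x ∈ U)
    (hint : ∀ N : ℕ, 1 ≤ N →
      IntegrableOn (fun y => Real.exp (2 * (N : ℝ) * (g y + ⟪x - y, g' y⟫))) U)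
    (K : Set (EuclideanSpace ℝ (Fin n)))
    (hK : IsCompact K) (hKU : K ⊆ U) (hxK : x ∉ K) :
    (∀ y ∈ K, g y + ⟪x - y, g' y⟫ < g x) ∧
    TendstoUniformlyOn
      (fun (N : ℕ) (y : EuclideanSpace ℝ (Fin n)) =>
        Real.exp (2 * (N : ℝ) * (g y + ⟪x - y, g' y⟫)) /
          ∫ y' in U, Real.exp (2 * (N : ℝ) * (g y' + ⟪x - y', g' y'⟫)))
      0 atTop K := by
  set φ := fun y => g y + ⟪x - y, g' y⟫
  have hφ_lt : ∀ y ∈ K, φ y < g x := fun y hy =>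
    hconv.add_inner_sub_gradient_lt hgrad hhess hposdef (hKU hy) hx (ne_of_mem_of_not_mem hy hxK)
  have hφ_cont : ContinuousOn φ U := fun y hy =>
    ((hgrad y hy).continuousAt.add
      ((continuousAt_const.sub continuousAt_id).inner (hhess y hy).continuousAt)).continuousWithinAt
  have hφx : φ x = g x := by simp [φ]
  refine ⟨hφ_lt, tendstoUniformlyOn_exp_mul_div_setIntegral hK (hφ_cont.mono hKU)
    (hφ_cont.continuousAt (hU.mem_nhds hx)) (hφx ▸ hφ_lt) (hU.mem_nhds hx) ?_
    (eventually_ge_atTop 1 |>.mono hint)⟩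
  exact tendsto_natCast_atTop_atTop.const_mul_atTop two_pos

/-- For `g` C² with positive definite Hessian on an open convex `U`,
`φ(x,y) = g(y) + ⟪x - y, ∇g(y)⟫` (so `φ(x,x) = g(x)`), and `e^{2Nφ(x,·)}` integrable on `U`
for all `N ≥ 1`, the normalized density `e^{2Nφ(x,y)} / ∫_U e^{2Nφ(x,y')} dy'` tends to `0`
uniformly on any compact `K ⊆ U` with `x ∉ K`; moreover `φ(x,y) < φ(x,x)` on `K`. -/
theorem density_concentration {n : ℕ} (U : Set (EuclideanSpace ℝ (Fin n)))
    (hU : IsOpen U) (hconv : Convex ℝ U)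
    (g : EuclideanSpace ℝ (Fin n) → ℝ)
    (g' : EuclideanSpace ℝ (Fin n) → EuclideanSpace ℝ (Fin n))
    (H : EuclideanSpace ℝ (Fin n) → EuclideanSpace ℝ (Fin n) →L[ℝ] EuclideanSpace ℝ (Fin n))
    (hg : ContDiffOn ℝ 2 g U)
    (hgrad : ∀ y ∈ U, HasGradientAt g (g' y) y)
    (hhess : ∀ y ∈ U, HasFDerivAt g' (H y) y)
    (hposdef : ∀ y ∈ U, ∀ v : EuclideanSpace ℝ (Fin n), v ≠ 0 → 0 < ⟪H y v, v⟫)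
    (x : EuclideanSpace ℝ (Fin n)) (hx : x ∈ U)
    (hint : ∀ N : ℕ, 1 ≤ N →
      IntegrableOn (fun y => Real.exp (2 * (N : ℝ) * (g y + ⟪x - y, g' y⟫))) U)
    (K : Set (EuclideanSpace ℝ (Fin n)))
    (hK : IsCompact K) (hKU : K ⊆ U) (hxK : x ∉ K) :
    (∀ y ∈ K, g y + ⟪x - y, g' y⟫ < g x) ∧
    TendstoUniformlyOn
      (fun (N : ℕ) (y : EuclideanSpace ℝ (Fin n)) =>
        Real.exp (2 * (N : ℝ) * (g y + ⟪x - y, g' y⟫)) /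
          ∫ y' in U, Real.exp (2 * (N : ℝ) * (g y' + ⟪x - y', g' y'⟫)))
      0 atTop K :=
  density_concentration_general U hU hconv g g' H hgrad hhess hposdef x hx hint K hK hKU hxK
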